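/- (Full identifiability theorem.) Let V be a finite type of trajectories with connected comparison graph G, K a finite type of experts, R, R' : V → ℝ reward functions and α, α' : K → ℝ trust parameters with αₖ ≠ 0 and α'ₖ ≠ 0 for all k. Suppose: (1) each edge {τᵢ, τⱼ} of G is labeled by some expert k with αₖ·(R(τᵢ)-R(τⱼ)) = α'ₖ·(R'(τᵢ)-R'(τⱼ)); (2) the 'expert graph' in which k and l are adjacent iff they share a labeled comparison (τᵢ,τⱼ) with R(τᵢ) ≠ R(τⱼ) is connected, and every expert has at least one comparison with R(τᵢ) ≠ R(τⱼ). Then there exist a ≠ 0 and b ∈ ℝ such that R'(τ) = a·R(τ) + b for all τ and α'ₖ = αₖ/a for all k. -/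

import Mathlib

theorem full_identifiability {V K : Type*} [Fintype V] [Fintype K]
    (G : SimpleGraph V) (hG : G.Connected)
    (R R' : V → ℝ) (α α' : K → ℝ)
    (hα : ∀ k, α k ≠ 0) (hα' : ∀ k, α' k ≠ 0)
    -- labeling of comparisons: which expert labeled which ordered pair
    (labeled : K → V → V → Prop)
    -- (1) every edge of G is labeled by some expert, and labeled comparisons
    -- have matching logits
    (hedge : ∀ u v : V, G.Adj u v → ∃ k : K, labeled k u v)
    (hlogit : ∀ (k : K) (u v : V), labeled k u v →
      α k * (R u - R v) = α' k * (R' u - R' v))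
    -- (2) expert graph connectedness
    (HE : SimpleGraph K)
    (hHEadj : ∀ k l : K, HE.Adj k l →
      ∃ u v : V, labeled k u v ∧ labeled l u v ∧ R u ≠ R v)
    (hHEconn : HE.Connected)
    -- every expert has at least one informative comparison
    (hinf : ∀ k : K, ∃ u v : V, labeled k u v ∧ R u ≠ R v) :
    ∃ a b : ℝ, a ≠ 0 ∧ (∀ τ : V, R' τ = a * R τ + b) ∧ (∀ k : K, α' k = α k / a) := by
  classical
  set f : K → ℝ := fun k => α k / α' k with hf
  -- f is constant on HE-adjacent experts
  have hadj : ∀ k l : K, HE.Adj k l → f k = f l := by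
    intro k l h
    obtain ⟨u, v, hk, hl, hRuv⟩ := hHEadj k l h
    have hk' := hlogit k u v hk
    have hl' := hlogit l u v hl
    have hR : R u - R v ≠ 0 := sub_ne_zero.mpr hRuv
    have hR' : R' u - R' v ≠ 0 := by
      intro h0
      rw [h0, mul_zero] at hk'
      exact hα k (by
        have := mul_eq_zero.mp hk'
        rcases this with h1 | h1
        · exact h1
        · exact absurd h1 hR)
    show α k / α' k = α l / α' l
    rw [div_eq_div_iff (hα' k) (hα' l)]
    have e1 : α k * (R u - R v) = α' k * (R' u - R' v) := hk'
    have e2 : α l * (R u - R v) = α' l * (R' u - R' v) := hl'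
    -- α k * α' l = α l * α' k
    have key : (α k * α' l - α l * α' k) * ((R u - R v) * (R' u - R' v)) = 0 := by
      linear_combination (α' l * (R' u - R' v)) * e1 - (α' k * (R' u - R' v)) * e2
    have hne : (R u - R v) * (R' u - R' v) ≠ 0 := mul_ne_zero hR hR'
    have := (mul_eq_zero.mp key).resolve_right hne
    linarith
  have hreach : ∀ k l : K, HE.Reachable k l → f k = f l := by
    intro k l h
    obtain ⟨w⟩ := h
    induction w with
    | nil => rfl
    | cons h _ ih => exact (hadj _ _ h).trans ih
  obtain ⟨k0⟩ : Nonempty K := hHEconn.nonempty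
  set a : ℝ := f k0 with ha
  have hfconst : ∀ k, f k = a := fun k => hreach k k0 (hHEconn k k0)
  have ha0 : a ≠ 0 := div_ne_zero (hα k0) (hα' k0)
  -- every labeled pair satisfies ΔR' = a ΔR
  have hpair : ∀ (k : K) (u v : V), labeled k u v → R' u - R' v = a * (R u - R v) := by
    intro k u v h
    have h1 := hlogit k u v h
    have hk := hfconst k
    have h2 : α' k ≠ 0 := hα' k
    rw [hf] at hk
    simp only at hk
    have : α k = a * α' k := by
      field_simp at hk; linarith [hk]
    rw [this] at h1
    have := mul_left_cancel₀ h2 (by linarith [h1] : α' k * (R' u - R' v) = α' k * (a * (R u - R v)))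
    linarith [this]
  -- g is constant on G
  set g : V → ℝ := fun v => R' v - a * R v with hg
  have hgadj : ∀ u v : V, G.Adj u v → g u = g v := by
    intro u v h
    obtain ⟨k, hk⟩ := hedge u v h
    have := hpair k u v hk
    show R' u - a * R u = R' v - a * R v
    linarith
  have hgreach : ∀ u v : V, G.Reachable u v → g u = g v := by
    intro u v h
    obtain ⟨w⟩ := h
    induction w with
    | nil => rfl
    | cons h _ ih => exact (hgadj _ _ h).trans ih
  obtain ⟨v0⟩ : Nonempty V := hG.nonempty
  refine ⟨a, R' v0 - a * R v0, ha0, ?_, ?_⟩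
  · intro τ
    have := hgreach τ v0 (hG τ v0)
    simp only [hg] at this
    linarith
  · intro k
    have h1 := hfconst k
    simp only [hf] at h1
    rw [eq_div_iff ha0]
    rw [div_eq_iff (hα' k)] at h1
    linarith [mul_comm (α' k) a, h1]
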